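/- Let X₁, X₂, … be vectors in ℝⁿ, let A₀ be a symmetric positive definite n×n matrix, and set A_t = A₀ + Σ_{i=1}^{t} X_i X_iᵀ. Then for all T ≥ 1, Σ_{t=1}^{T} X_tᵀ A_t^{-1} X_t ≤ log det(A_T) − log det(A₀). -/

import Mathlib

open Matrix Finset

lemma aux_psd_vmv {n : ℕ} (v : Fin n → ℝ) : (vecMulVec v v).PosSemidef := by
  rw [posSemidef_iff_dotProduct_mulVec]
  constructor
  · ext i j; simp [vecMulVec, conjTranspose, mul_comm]
  · intro x
    have h : x ⬝ᵥ vecMulVec v v *ᵥ x = (v ⬝ᵥ x) * (v ⬝ᵥ x) := by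
      simp only [vecMulVec, mulVec, dotProduct, of_apply, Finset.mul_sum, Finset.sum_mul]
      rw [Finset.sum_comm]
      congr 1; ext i; congr 1; ext j; ring
    rw [RCLike.nonneg_iff]
    refine ⟨by simpa [h] using mul_self_nonneg (v ⬝ᵥ x), by simp⟩

lemma aux_step_det {n : ℕ} (v : Fin n → ℝ) (B : Matrix (Fin n) (Fin n) ℝ)
    (hB : IsUnit B.det) :
    (B - vecMulVec v v).det = B.det * (1 - v ⬝ᵥ B⁻¹ *ᵥ v) := by
  have h1 : B - vecMulVec v v = B + replicateCol Unit (-v) * replicateRow Unit v := by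
    rw [← vecMulVec_eq Unit]
    ext i j; simp [vecMulVec]; ring
  rw [h1, det_add_replicateCol_mul_replicateRow hB]
  congr 1
  rw [det_unique]
  simp [mul_apply, mulVec, dotProduct, Finset.mul_sum, Finset.sum_mul, mul_comm]
  rw [sub_eq_add_neg]
  congr 1
  rw [neg_inj, Finset.sum_comm]
  exact Finset.sum_congr rfl fun i _ => Finset.sum_congr rfl fun j _ => by ring

/-- For vectors `X₁, X₂, …` in `ℝⁿ` and `A_t = A₀ + Σ_{i=1}^{t} X_i X_iᵀ` with `A₀`
symmetric positive definite, for all `T ≥ 1`,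
`Σ_{t=1}^{T} X_tᵀ A_t⁻¹ X_t ≤ log det A_T − log det A₀`. -/
theorem ls_quadratic_sum_le_log_det {n : ℕ}
    (X : ℕ → (Fin n → ℝ)) (A₀ : Matrix (Fin n) (Fin n) ℝ) (hA₀ : A₀.PosDef)
    (A : ℕ → Matrix (Fin n) (Fin n) ℝ)
    (hA : ∀ t, A t = A₀ + ∑ i ∈ Finset.Icc 1 t, vecMulVec (X i) (X i)) :
    ∀ T : ℕ, 1 ≤ T →
      ∑ t ∈ Finset.Icc 1 T, X t ⬝ᵥ ((A t)⁻¹ *ᵥ X t) ≤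
        Real.log (A T).det - Real.log A₀.det := by
  have hpos : ∀ t, (A t).PosDef := by
    intro t
    rw [hA t]
    refine hA₀.add_posSemidef ?_
    induction (Finset.Icc 1 t) using Finset.induction with
    | empty => simpa using Matrix.PosSemidef.zero
    | insert _ _ hx ih => rw [Finset.sum_insert hx]; exact (aux_psd_vmv _).add ih
  have hstep : ∀ t : ℕ, X (t+1) ⬝ᵥ ((A (t+1))⁻¹ *ᵥ X (t+1)) ≤
      Real.log (A (t+1)).det - Real.log (A t).det := by
    intro t
    have hAt : A t = A (t+1) - vecMulVec (X (t+1)) (X (t+1)) := by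
      rw [hA t, hA (t+1), Finset.sum_Icc_succ_top (by omega)]
      abel
    have hdetpos : 0 < (A (t+1)).det := (hpos (t+1)).det_pos
    have hdetpos' : 0 < (A t).det := (hpos t).det_pos
    have hid : (A t).det = (A (t+1)).det * (1 - X (t+1) ⬝ᵥ (A (t+1))⁻¹ *ᵥ X (t+1)) := by
      rw [hAt]; exact aux_step_det _ _ hdetpos.ne'.isUnit
    set q := X (t+1) ⬝ᵥ (A (t+1))⁻¹ *ᵥ X (t+1) with hq
    have hx : (A t).det / (A (t+1)).det = 1 - q := by
      rw [hid]; field_simp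
    have hxpos : 0 < (A t).det / (A (t+1)).det := div_pos hdetpos' hdetpos
    have hlog := Real.log_le_sub_one_of_pos hxpos
    rw [Real.log_div hdetpos'.ne' hdetpos.ne'] at hlog
    rw [hx] at hlog
    linarith
  intro T hT
  have key : ∀ T : ℕ, ∑ t ∈ Finset.Icc 1 T, X t ⬝ᵥ ((A t)⁻¹ *ᵥ X t) ≤
      Real.log (A T).det - Real.log (A 0).det := by
    intro T
    induction T with
    | zero => simp
    | succ T ih =>
      rw [Finset.sum_Icc_succ_top (by omega)]
      have := hstep T
      linarith
  have h0 : A 0 = A₀ := by rw [hA 0]; simp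
  have := key T
  rw [h0] at this
  exact this
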